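/- Let ν be a probability measure and m, m_{old}, h strictly positive probability densities with respect to ν such that ∫ m·(h/m_{old}) dν < ∞. Using the expansion log(1+z) = z - z²R(z) with R(z) ≤ (1/2)max(1, 1/(1+z)²), the KL increment satisfies: KL(m ‖ (1-v)m_{old} + v h) - KL(m ‖ m_{old}) = -v·(∫ m·(h/m_{old}) dν - 1) + v²·∫ m(y)·(h(y)/m_{old}(y) - 1)²·R(v(h(y)/m_{old}(y) - 1)) ν(dy), for v ∈ (0,1). -/

import Mathlib

open MeasureTheory

/- With `z = v (h/m_old - 1)` the mixture ratio is `((1-v) m_old + v h)/m_old = 1 + z`, so the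
integrand of the increment is `-m log (1 + z) = -m z + m z² R(z)` pointwise; integrating, the
linear part gives the drift `-v (∫ m h/m_old - 1)` because `∫ m = 1`. -/

/-- The second order Taylor remainder of `log (1+z)`:
`log (1+z) = z - z² R z` with `R 0 = 1/2`. -/
noncomputable def taylorRemainderR (z : ℝ) : ℝ :=
  if z = 0 then 1/2 else (z - Real.log (1 + z)) / z ^ 2

lemma log_one_add_eq_sub_sq_mul_taylorRemainderR (z : ℝ) :
    Real.log (1 + z) = z - z ^ 2 * taylorRemainderR z := by
  unfold taylorRemainderR
  split_ifs with hz
  · simp [hz]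
  · field_simp
    ring

lemma one_add_mul_div_sub_one {a b : ℝ} (ha : a ≠ 0) (v : ℝ) :
    1 + v * (b / a - 1) = ((1 - v) * a + v * b) / a := by
  field_simp
  ring

lemma mul_log_div_sub_mul_log_div {a b c : ℝ} (ha : a ≠ 0) (hb : b ≠ 0) (hc : c ≠ 0) :
    a * Real.log (a / b) - a * Real.log (a / c) = -(a * Real.log (b / c)) := by
  rw [Real.log_div ha hb, Real.log_div ha hc, Real.log_div hb hc]
  ring

lemma mul_log_div_mixture_sub_mul_log_div {m a b v : ℝ} (hm : m ≠ 0) (ha : a ≠ 0)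
    (hmix : (1 - v) * a + v * b ≠ 0) :
    m * Real.log (m / ((1 - v) * a + v * b)) - m * Real.log (m / a) =
      -v * (m * (b / a - 1)) +
        v ^ 2 * (m * (b / a - 1) ^ 2 * taylorRemainderR (v * (b / a - 1))) := by
  rw [mul_log_div_sub_mul_log_div hm hmix ha, ← one_add_mul_div_sub_one ha,
    log_one_add_eq_sub_sq_mul_taylorRemainderR]
  ring

lemma integral_mul_sub_one {Y : Type*} [MeasurableSpace Y] {ν : Measure Y} {m g : Y → ℝ}
    (hm : Integrable m ν) (hmg : Integrable (fun y => m y * g y) ν) :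
    ∫ y, m y * (g y - 1) ∂ν = (∫ y, m y * g y ∂ν) - ∫ y, m y ∂ν := by
  simp_rw [mul_sub_one]
  exact integral_sub hmg hm

theorem kl_increment_decomposition_general
    {Y : Type*} [MeasurableSpace Y] (ν : Measure Y)
    (m mold h : Y → ℝ)
    (hmpos : ∀ y, 0 < m y) (hmoldpos : ∀ y, 0 < mold y) (hhpos : ∀ y, 0 < h y)
    (hmint : Integrable m ν)
    (hm1 : ∫ y, m y ∂ν = 1)
    (hratio : Integrable (fun y => m y * (h y / mold y)) ν)
    (v : ℝ) (hv : v ∈ Set.Ioo (0:ℝ) 1)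
    (hKL' : Integrable
      (fun y => m y * Real.log (m y / ((1 - v) * mold y + v * h y))) ν)
    (hKL : Integrable (fun y => m y * Real.log (m y / mold y)) ν)
    (hE : Integrable (fun y => m y * (h y / mold y - 1) ^ 2 *
      taylorRemainderR (v * (h y / mold y - 1))) ν) :
    (∫ y, m y * Real.log (m y / ((1 - v) * mold y + v * h y)) ∂ν) -
        (∫ y, m y * Real.log (m y / mold y) ∂ν) =
      -(v * ((∫ y, m y * (h y / mold y) ∂ν) - 1)) +
        v ^ 2 * ∫ y, m y * (h y / mold y - 1) ^ 2 *
          taylorRemainderR (v * (h y / mold y - 1)) ∂ν := by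
  have hmix : ∀ y, (1 - v) * mold y + v * h y ≠ 0 := fun y =>
    (add_pos (mul_pos (sub_pos.2 hv.2) (hmoldpos y)) (mul_pos hv.1 (hhpos y))).ne'
  have hdrift : Integrable (fun y => m y * (h y / mold y - 1)) ν := by
    simp_rw [mul_sub_one]
    exact hratio.sub hmint
  rw [← integral_sub hKL' hKL,
    integral_congr_ae (ae_of_all ν fun y => mul_log_div_mixture_sub_mul_log_div
      (hmpos y).ne' (hmoldpos y).ne' (hmix y)),
    integral_add (hdrift.const_mul _) (hE.const_mul _), integral_const_mul, integral_const_mul,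
    integral_mul_sub_one hmint hratio, hm1]
  ring

/-- Exact one-step drift-plus-error decomposition of the KL increment in the PRx update:
`KL(m ‖ (1-v) m_old + v h) - KL(m ‖ m_old)
  = -v (∫ m (h/m_old) dν - 1) + v² ∫ m (h/m_old - 1)² R(v(h/m_old - 1)) dν`. -/
theorem kl_increment_decomposition
    {Y : Type*} [MeasurableSpace Y] (ν : Measure Y) [IsProbabilityMeasure ν]
    (m mold h : Y → ℝ)
    (hmpos : ∀ y, 0 < m y) (hmoldpos : ∀ y, 0 < mold y) (hhpos : ∀ y, 0 < h y)
    (hmint : Integrable m ν) (hmoldint : Integrable mold ν) (hhint : Integrable h ν)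
    (hm1 : ∫ y, m y ∂ν = 1) (hmold1 : ∫ y, mold y ∂ν = 1) (hh1 : ∫ y, h y ∂ν = 1)
    (hratio : Integrable (fun y => m y * (h y / mold y)) ν)
    (v : ℝ) (hv : v ∈ Set.Ioo (0:ℝ) 1)
    (hKL' : Integrable
      (fun y => m y * Real.log (m y / ((1 - v) * mold y + v * h y))) ν)
    (hKL : Integrable (fun y => m y * Real.log (m y / mold y)) ν)
    (hE : Integrable (fun y => m y * (h y / mold y - 1) ^ 2 *
      taylorRemainderR (v * (h y / mold y - 1))) ν) :
    (∫ y, m y * Real.log (m y / ((1 - v) * mold y + v * h y)) ∂ν) -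
        (∫ y, m y * Real.log (m y / mold y) ∂ν) =
      -(v * ((∫ y, m y * (h y / mold y) ∂ν) - 1)) +
        v ^ 2 * ∫ y, m y * (h y / mold y - 1) ^ 2 *
          taylorRemainderR (v * (h y / mold y - 1)) ∂ν :=
  kl_increment_decomposition_general ν m mold h hmpos hmoldpos hhpos hmint hm1 hratio v hv hKL' hKL
    hE
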